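/- arXiv:2310.16199 — 5 statements merged into one kernel-verified Lean document; each statement's English description precedes it below -/
import Mathlib

section
/- Let G ∈ ℝ^{n×n} and P ∈ ℝ^{n×n} be symmetric positive definite. If PG + Gᵀ P ≻ 0, then for every nonzero x ∈ ℝ^n the map s ↦ xᵀ (e^{sG})ᵀ P e^{sG} x is strictly increasing in s ∈ ℝ. -/
/-!
Along `v(s) = e^{sG} x` the derivative of `v(s)ᵀ P v(s)` is `v(s)ᵀ (P G + Gᵀ P) v(s)`, which is
positive because `e^{sG}` is invertible, so `v(s) ≠ 0`.
-/

open Matrix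

/-- Weighted quadratic form `xᵀ P x`. -/
noncomputable def quadForm {n : ℕ} (P : Matrix (Fin n) (Fin n) ℝ) (x : Fin n → ℝ) : ℝ :=
  x ⬝ᵥ P *ᵥ x

open scoped Matrix.Norms.Operator

theorem Matrix.dotProduct_mul_add_transpose_mul_mulVec {ι R : Type*} [Fintype ι]
    [CommSemiring R] (P G : Matrix ι ι R) (v : ι → R) :
    v ⬝ᵥ (P * G + Gᵀ * P) *ᵥ v = v ⬝ᵥ P *ᵥ (G *ᵥ v) + (G *ᵥ v) ⬝ᵥ P *ᵥ v := by
  rw [add_mulVec, dotProduct_add, ← mulVec_mulVec, ← mulVec_mulVec, dotProduct_mulVec v Gᵀ,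
    vecMul_transpose]

section Calculus

variable {𝕜 ι κ : Type*} [RCLike 𝕜] [Fintype ι] [Fintype κ]

theorem HasDerivAt.mulVec_const {A : 𝕜 → Matrix ι κ 𝕜} {A' : Matrix ι κ 𝕜} {s : 𝕜}
    (hA : HasDerivAt A A' s) (x : κ → 𝕜) :
    HasDerivAt (fun t => A t *ᵥ x) (A' *ᵥ x) s := by
  exact ((mulVecBilin 𝕜 𝕜).flip x).toContinuousLinearMap.hasFDerivAt.comp_hasDerivAt s hA

variable [DecidableEq ι]

theorem Matrix.hasDerivAt_exp_smul_mulVec (G : Matrix ι ι 𝕜) (x : ι → 𝕜) (s : 𝕜) :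
    HasDerivAt (fun t : 𝕜 => NormedSpace.exp (t • G) *ᵥ x)
      (G *ᵥ (NormedSpace.exp (s • G) *ᵥ x)) s := by
  rw [mulVec_mulVec]
  exact (hasDerivAt_exp_smul_const' G s).mulVec_const x

theorem Matrix.exp_mulVec_ne_zero (A : Matrix ι ι 𝕜) {x : ι → 𝕜} (hx : x ≠ 0) :
    NormedSpace.exp A *ᵥ x ≠ 0 :=
  (mulVec_injective_iff_isUnit.mpr (isUnit_exp A)).ne_iff' (mulVec_zero _) |>.mpr hx

end Calculus

theorem HasDerivAt.quadForm {n : ℕ} (P : Matrix (Fin n) (Fin n) ℝ) {v : ℝ → Fin n → ℝ}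
    {v' : Fin n → ℝ} {s : ℝ} (hv : HasDerivAt v v' s) :
    HasDerivAt (fun t => quadForm P (v t)) (v s ⬝ᵥ P *ᵥ v' + v' ⬝ᵥ P *ᵥ v s) s :=
  ((dotProductBilin ℝ ℝ).compl₂ P.mulVecLin).toContinuousBilinearMap.hasDerivAt_of_bilinear
    (fun _ => hv) (fun _ => hv)

theorem stmt0_general {n : ℕ} (G P : Matrix (Fin n) (Fin n) ℝ)
    (hmono : (P * G + Gᵀ * P).PosDef)
    (x : Fin n → ℝ) (hx : x ≠ 0) :
    StrictMono (fun s : ℝ => quadForm P (NormedSpace.exp (s • G) *ᵥ x)) := by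
  refine strictMono_of_hasDerivAt_pos (fun s => (hasDerivAt_exp_smul_mulVec G x s).quadForm P)
    fun s => ?_
  rw [← dotProduct_mul_add_transpose_mul_mulVec]
  exact hmono.dotProduct_mulVec_pos (exp_mulVec_ne_zero _ hx)

theorem stmt0 {n : ℕ} (G P : Matrix (Fin n) (Fin n) ℝ)
    (hP : P.PosDef) (hmono : (P * G + Gᵀ * P).PosDef)
    (x : Fin n → ℝ) (hx : x ≠ 0) :
    StrictMono (fun s : ℝ => quadForm P (NormedSpace.exp (s • G) *ᵥ x)) :=
  stmt0_general G P hmono x hx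
end

section
/- Let G ∈ ℝ^{n×n}, P ≻ 0 with PG + Gᵀ P ≻ 0. Then for every x ∈ ℝ^n with x ≠ 0 there exists a unique s ∈ ℝ such that ‖e^{-sG} x‖_P = 1. -/
/-!
Along the flow `y(s) = e^{-sG} x` the Lyapunov function `V(s) = y(s)ᵀ P y(s)` satisfies
`V' = -yᵀ (PG + GᵀP) y ≤ -α V`, where `α > 0` compares the two positive definite forms on the
unit sphere. Hence `log V` has derivative at most `-α`: it is a strictly decreasing continuous
bijection of `ℝ`, and `‖e^{-sG} x‖_P = 1` exactly at its unique zero.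
-/

open Matrix Filter

attribute [local instance] Matrix.linftyOpNormedRing Matrix.linftyOpNormedAlgebra

theorem Function.bijective_of_hasDerivAt_le_neg {g g' : ℝ → ℝ} {α : ℝ} (hα : 0 < α)
    (hg : ∀ s, HasDerivAt g (g' s) s) (hg' : ∀ s, g' s ≤ -α) : Function.Bijective g := by
  refine ⟨(strictAnti_of_hasDerivAt_neg hg fun s ↦ (hg' s).trans_lt (neg_neg_of_pos hα)).injective,
    ?_⟩
  have hanti : Antitone fun s ↦ g s + α * s :=
    antitone_of_hasDerivAt_nonpos (f' := fun s ↦ g' s + α * 1)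
      (fun s ↦ (hg s).add ((hasDerivAt_id s).const_mul α)) fun s ↦
        show g' s + α * 1 ≤ 0 by linarith [hg' s]
  refine Continuous.surjective' (continuous_iff_continuousAt.2 fun s ↦ (hg s).continuousAt) ?_ ?_
  · refine tendsto_atTop_mono' _ ?_ (tendsto_atTop_add_const_left _ (g 0)
      (tendsto_neg_atBot_atTop.comp (tendsto_id.const_mul_atBot hα)))
    filter_upwards [eventually_le_atBot 0] with s hs
    have := hanti hs
    simp only [Function.comp_apply, id, mul_zero, add_zero] at this ⊢
    linarith
  · refine tendsto_atBot_mono' _ ?_ (tendsto_atBot_add_const_left _ (g 0)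
      (tendsto_neg_atTop_atBot.comp (tendsto_id.const_mul_atTop hα)))
    filter_upwards [eventually_ge_atTop 0] with s hs
    have := hanti hs
    simp only [Function.comp_apply, id, mul_zero, add_zero] at this ⊢
    linarith

theorem HasDerivAt.dotProduct_mulVec_self {ι : Type*} [Fintype ι] (A : Matrix ι ι ℝ)
    {y : ℝ → ι → ℝ} {y' : ι → ℝ} {s : ℝ} (hy : HasDerivAt y y' s) :
    HasDerivAt (fun t ↦ y t ⬝ᵥ A *ᵥ y t) (y s ⬝ᵥ A *ᵥ y' + y' ⬝ᵥ A *ᵥ y s) s := by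
  classical
  have := (toLinearMap₂' ℝ A).toContinuousBilinearMap.hasDerivAt_of_bilinear
    (fun _ ↦ hy) (fun _ ↦ hy)
  simpa only [LinearMap.toContinuousBilinearMap_apply, toLinearMap₂'_apply'] using this

namespace Matrix

variable {ι : Type*} [Fintype ι]

theorem smul_dotProduct_mulVec_smul (A : Matrix ι ι ℝ) (c : ℝ) (v : ι → ℝ) :
    (c • v) ⬝ᵥ A *ᵥ (c • v) = c ^ 2 * (v ⬝ᵥ A *ᵥ v) := by
  simp only [mulVec_smul, smul_dotProduct, dotProduct_smul, smul_eq_mul]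
  ring

theorem dotProduct_mulVec_add_dotProduct_mulVec (A P : Matrix ι ι ℝ) (v : ι → ℝ) :
    v ⬝ᵥ P *ᵥ (A *ᵥ v) + (A *ᵥ v) ⬝ᵥ P *ᵥ v = v ⬝ᵥ (P * A + Aᵀ * P) *ᵥ v := by
  rw [add_mulVec, dotProduct_add, ← mulVec_mulVec, ← mulVec_mulVec, dotProduct_mulVec v Aᵀ,
    vecMul_transpose]

theorem dotProduct_mulVec_nonneg_of_forall_sphere {A : Matrix ι ι ℝ}
    (h : ∀ u ∈ Metric.sphere (0 : ι → ℝ) 1, 0 ≤ u ⬝ᵥ A *ᵥ u) (y : ι → ℝ) :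
    0 ≤ y ⬝ᵥ A *ᵥ y := by
  rcases eq_or_ne y 0 with rfl | hy
  · simp
  have hy' : ‖y‖ ≠ 0 := norm_ne_zero_iff.2 hy
  have hu : ‖y‖⁻¹ • y ∈ Metric.sphere (0 : ι → ℝ) 1 := by
    simp [norm_smul, inv_mul_cancel₀ hy']
  have := A.smul_dotProduct_mulVec_smul ‖y‖ (‖y‖⁻¹ • y)
  rw [smul_smul, mul_inv_cancel₀ hy', one_smul] at this
  rw [this]
  exact mul_nonneg (sq_nonneg _) (h _ hu)

theorem PosDef.exists_pos_mul_dotProduct_mulVec_le {Q : Matrix ι ι ℝ} (hQ : Q.PosDef)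
    (P : Matrix ι ι ℝ) : ∃ α > 0, ∀ y : ι → ℝ, α * (y ⬝ᵥ P *ᵥ y) ≤ y ⬝ᵥ Q *ᵥ y := by
  suffices ∃ α > 0, ∀ u ∈ Metric.sphere (0 : ι → ℝ) 1, α * (u ⬝ᵥ P *ᵥ u) ≤ u ⬝ᵥ Q *ᵥ u by
    obtain ⟨α, hα, h⟩ := this
    refine ⟨α, hα, fun y ↦ ?_⟩
    have := dotProduct_mulVec_nonneg_of_forall_sphere (A := Q - α • P)
      (fun u hu ↦ by simpa [sub_mulVec, smul_mulVec] using h u hu) y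
    simpa [sub_mulVec, smul_mulVec] using this
  rcases (Metric.sphere (0 : ι → ℝ) 1).eq_empty_or_nonempty with hS | hS
  · exact ⟨1, one_pos, by simp [hS]⟩
  have hcont (A : Matrix ι ι ℝ) : Continuous fun u : ι → ℝ ↦ u ⬝ᵥ A *ᵥ u := by fun_prop
  obtain ⟨u₀, hu₀, hmin⟩ := (isCompact_sphere 0 1).exists_isMinOn hS (hcont Q).continuousOn
  obtain ⟨C, hC⟩ := (isCompact_sphere (0 : ι → ℝ) 1).exists_bound_of_continuousOn
    (hcont P).continuousOn
  have hc : 0 < u₀ ⬝ᵥ Q *ᵥ u₀ := hQ.dotProduct_mulVec_pos (by rintro rfl; simp at hu₀)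
  refine ⟨u₀ ⬝ᵥ Q *ᵥ u₀ / (|C| + 1), by positivity, fun u hu ↦ ?_⟩
  calc u₀ ⬝ᵥ Q *ᵥ u₀ / (|C| + 1) * (u ⬝ᵥ P *ᵥ u)
      ≤ u₀ ⬝ᵥ Q *ᵥ u₀ / (|C| + 1) * (|C| + 1) := by
        gcongr
        exact ((le_abs_self _).trans (hC u hu)).trans (by linarith [le_abs_self C])
    _ = u₀ ⬝ᵥ Q *ᵥ u₀ := div_mul_cancel₀ _ (by positivity)
    _ ≤ u ⬝ᵥ Q *ᵥ u := hmin hu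

variable [DecidableEq ι]

theorem exp_mulVec_ne_zero_s3 (A : Matrix ι ι ℝ) {x : ι → ℝ} (hx : x ≠ 0) :
    NormedSpace.exp A *ᵥ x ≠ 0 := fun h ↦
  hx <| mulVec_injective_of_isUnit (isUnit_exp A) (h.trans (mulVec_zero _).symm)

theorem hasDerivAt_exp_smul_mulVec_s3 (A : Matrix ι ι ℝ) (x : ι → ℝ) (s : ℝ) :
    HasDerivAt (fun t : ℝ ↦ NormedSpace.exp (t • A) *ᵥ x)
      (A *ᵥ (NormedSpace.exp (s • A) *ᵥ x)) s := by
  have := (mulVecBilin ℝ ℝ).toContinuousBilinearMap.hasDerivAt_of_bilinear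
    (fun _ ↦ hasDerivAt_exp_smul_const' A s) (fun _ ↦ hasDerivAt_const s x)
  simp only [LinearMap.toContinuousBilinearMap_apply, mulVecBilin_apply, mulVec_zero,
    zero_add] at this
  rw [mulVec_mulVec]
  exact this

theorem hasDerivAt_dotProduct_mulVec_exp_smul_mulVec (A P : Matrix ι ι ℝ) (x : ι → ℝ) (s : ℝ) :
    HasDerivAt (fun t : ℝ ↦ (NormedSpace.exp (t • A) *ᵥ x) ⬝ᵥ P *ᵥ (NormedSpace.exp (t • A) *ᵥ x))
      ((NormedSpace.exp (s • A) *ᵥ x) ⬝ᵥ (P * A + Aᵀ * P) *ᵥ (NormedSpace.exp (s • A) *ᵥ x)) s := by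
  rw [← dotProduct_mulVec_add_dotProduct_mulVec]
  exact (hasDerivAt_exp_smul_mulVec_s3 A x s).dotProduct_mulVec_self P

end Matrix

/-- Weighted Euclidean norm `‖x‖_P = √(xᵀ P x)`. -/
noncomputable def wnorm {n : ℕ} (P : Matrix (Fin n) (Fin n) ℝ) (x : Fin n → ℝ) : ℝ :=
  Real.sqrt (x ⬝ᵥ P *ᵥ x)

theorem stmt3 {n : ℕ} (G P : Matrix (Fin n) (Fin n) ℝ)
    (hP : P.PosDef) (hmono : (P * G + Gᵀ * P).PosDef)
    (x : Fin n → ℝ) (hx : x ≠ 0) :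
    ∃! s : ℝ, wnorm P (NormedSpace.exp ((-s) • G) *ᵥ x) = 1 := by
  set Q := P * G + Gᵀ * P
  set y : ℝ → Fin n → ℝ := fun s ↦ NormedSpace.exp (s • -G) *ᵥ x
  set V : ℝ → ℝ := fun s ↦ y s ⬝ᵥ P *ᵥ y s
  have hV : ∀ s, 0 < V s := fun s ↦ hP.dotProduct_mulVec_pos (exp_mulVec_ne_zero_s3 _ hx)
  have hV' : ∀ s, HasDerivAt V (-(y s ⬝ᵥ Q *ᵥ y s)) s := fun s ↦ by
    have := hasDerivAt_dotProduct_mulVec_exp_smul_mulVec (-G) P x s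
    rwa [show P * -G + (-G)ᵀ * P = -Q by
      simp only [Q, transpose_neg, mul_neg, neg_mul, neg_add], neg_mulVec,
      dotProduct_neg] at this
  obtain ⟨α, hα, hQP⟩ := hmono.exists_pos_mul_dotProduct_mulVec_le P
  have hlogV : Function.Bijective fun s ↦ Real.log (V s) :=
    Function.bijective_of_hasDerivAt_le_neg hα (fun s ↦ (hV' s).log (hV s).ne') fun s ↦ by
      rw [neg_div, neg_le_neg_iff, le_div_iff₀ (hV s)]
      exact hQP (y s)
  convert hlogV.existsUnique 0 using 2 with s
  rw [wnorm, neg_smul, ← smul_neg, Real.sqrt_eq_one]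
  exact ⟨fun h ↦ by rw [show V s = 1 from h, Real.log_one],
    Real.eq_one_of_pos_of_log_eq_zero (hV s)⟩
end

section
/- Let A, B, G₀ ∈ ℝ^{n×n} and Y₀ ∈ ℝ^{m×n} satisfy A G₀ − G₀ A + B Y₀ = A and G₀ B = 0, and suppose G₀ − Iₙ is invertible. Define A₀ = A + B Y₀ (G₀ − Iₙ)^{-1} and, for μ ∈ ℝ, G_d = Iₙ + μ G₀. Then A₀ G_d = (G_d + μ Iₙ) A₀ and G_d B = B. -/
open Matrix

theorem stmt8 {n m : ℕ} (A G₀ : Matrix (Fin n) (Fin n) ℝ)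
    (B : Matrix (Fin n) (Fin m) ℝ) (Y₀ : Matrix (Fin m) (Fin n) ℝ)
    (h1 : A * G₀ - G₀ * A + B * Y₀ = A) (h2 : G₀ * B = 0)
    (hinv : IsUnit (G₀ - 1))
    (A₀ : Matrix (Fin n) (Fin n) ℝ) (hA₀ : A₀ = A + B * Y₀ * (G₀ - 1)⁻¹)
    (μ : ℝ) (Gd : Matrix (Fin n) (Fin n) ℝ) (hGd : Gd = 1 + μ • G₀) :
    A₀ * Gd = (Gd + μ • (1 : Matrix (Fin n) (Fin n) ℝ)) * A₀ ∧ Gd * B = B := by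
  have hdet : IsUnit (G₀ - 1).det := (Matrix.isUnit_iff_isUnit_det _).mp hinv
  have hCi : (G₀ - 1)⁻¹ * (G₀ - 1) = 1 := Matrix.nonsing_inv_mul _ hdet
  have hCG : (G₀ - 1)⁻¹ * G₀ = 1 + (G₀ - 1)⁻¹ := by
    have h := hCi
    rw [mul_sub, mul_one, sub_eq_iff_eq_add] at h
    rw [h]
  have e1 : A * G₀ = A - B * Y₀ + G₀ * A := sub_eq_iff_eq_add.mp (eq_sub_of_add_eq h1)
  have key : A₀ * G₀ = (G₀ + 1) * A₀ := by
    subst hA₀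
    rw [add_mul, add_mul, mul_add, one_mul, mul_assoc (B * Y₀), hCG,
      ← Matrix.mul_assoc G₀ (B * Y₀), ← Matrix.mul_assoc G₀ B Y₀, h2, e1, mul_add, mul_one]
    simp only [Matrix.zero_mul]
    abel
  constructor
  · subst hGd
    rw [mul_add, mul_one, add_mul, add_mul, one_mul, mul_smul_comm, smul_mul_assoc,
      smul_mul_assoc, one_mul, key, add_mul, one_mul, smul_add]
    abel
  · subst hGd
    rw [Matrix.add_mul, Matrix.one_mul, Matrix.smul_mul, h2, smul_zero, add_zero]
end

section
/- Let A ∈ ℝ^{n×n} satisfy A G_d = (G_d + μ Iₙ) A for some matrix G_d ∈ ℝ^{n×n} and μ ∈ ℝ, and let B ∈ ℝ^{n×m} satisfy G_d B = B. Then the linear vector field x ↦ A x is d-homogeneous of degree μ with respect to d(s) = e^{s G_d}, i.e. A e^{s G_d} x = e^{μs} e^{s G_d} A x for all x ∈ ℝ^n and s ∈ ℝ. -/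
/-! Since `A (s G) = (s G + μ s I) A`, the matrix `A` semiconjugates `exp (s G)` to
`exp (s G + μ s I) = e^{μ s} exp (s G)`, the scalar part commuting with everything. -/

open Matrix

section MatrixExp

variable {ι : Type*} [Fintype ι] [DecidableEq ι]

theorem Matrix.semiconjBy_exp_right {𝔸 : Type*} [NormedRing 𝔸] [NormedAlgebra ℚ 𝔸]
    [CompleteSpace 𝔸] {X A B : Matrix ι ι 𝔸} (h : SemiconjBy X A B) :
    SemiconjBy X (NormedSpace.exp A) (NormedSpace.exp B) :=
  open scoped Norms.Operator in
  @SemiconjBy.exp_right _ _ _ (inferInstanceAs (CompleteSpace (ι → ι → 𝔸))) _ _ _ h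

theorem Matrix.exp_smul_one (r : ℝ) :
    NormedSpace.exp (r • (1 : Matrix ι ι ℝ)) = Real.exp r • 1 := by
  rw [← diagonal_one, ← diagonal_smul, exp_diagonal, ← diagonal_smul]
  congr 1
  ext i
  simp [Real.exp_eq_exp_ℝ]

theorem Matrix.exp_add_smul_one (G : Matrix ι ι ℝ) (r : ℝ) :
    NormedSpace.exp (G + r • 1) = Real.exp r • NormedSpace.exp G := by
  rw [exp_add_of_commute _ _ ((Commute.one_right G).smul_right r), exp_smul_one,
    mul_smul_comm, mul_one]

theorem Matrix.mul_exp_smul_of_mul_eq {A G : Matrix ι ι ℝ} {μ : ℝ} (hA : A * G = (G + μ • 1) * A)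
    (s : ℝ) :
    A * NormedSpace.exp (s • G) = Real.exp (μ * s) • (NormedSpace.exp (s • G) * A) := by
  have h : SemiconjBy A (s • G) (s • G + (μ * s) • 1) := by
    rw [SemiconjBy, mul_smul_comm, hA, add_mul, smul_add, add_mul, smul_mul_assoc,
      smul_mul_assoc, smul_mul_assoc, smul_smul, mul_comm s μ]
  rw [(semiconjBy_exp_right h).eq, exp_add_smul_one, smul_mul_assoc]

end MatrixExp

theorem stmt9_general {n : ℕ} (A Gd : Matrix (Fin n) (Fin n) ℝ) (μ : ℝ)
    (hA : A * Gd = (Gd + μ • (1 : Matrix (Fin n) (Fin n) ℝ)) * A) :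
    ∀ (x : Fin n → ℝ) (s : ℝ),
      A *ᵥ (NormedSpace.exp (s • Gd) *ᵥ x) =
        Real.exp (μ * s) • (NormedSpace.exp (s • Gd) *ᵥ (A *ᵥ x)) := by
  intro x s
  rw [mulVec_mulVec, mul_exp_smul_of_mul_eq hA, smul_mulVec, ← mulVec_mulVec]

theorem stmt9 {n m : ℕ} (A Gd : Matrix (Fin n) (Fin n) ℝ) (μ : ℝ)
    (hA : A * Gd = (Gd + μ • (1 : Matrix (Fin n) (Fin n) ℝ)) * A)
    (B : Matrix (Fin n) (Fin m) ℝ) (hB : Gd * B = B) :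
    ∀ (x : Fin n → ℝ) (s : ℝ),
      A *ᵥ (NormedSpace.exp (s • Gd) *ᵥ x) =
        Real.exp (μ * s) • (NormedSpace.exp (s • Gd) *ᵥ (A *ᵥ x)) :=
  stmt9_general A Gd μ hA
end

section
/- Let Q ∈ ℝ^{p×p} be symmetric positive definite, G_{0,ω} ∈ ℝ^{p×p}, μ ∈ ℝ, and G_{d_ω} = I_p + μ(I_p + G_{0,ω}). If 1 + μ + μ·λ_i(Q^{1/2} G_{0,ω} Q^{-1/2} + Q^{-1/2} G_{0,ω}ᵀ Q^{1/2})/2 > 0 for every eigenvalue index i, then Q G_{d_ω} + G_{d_ω}ᵀ Q ≻ 0 and G_{d_ω} is anti-Hurwitz (all eigenvalues of G_{d_ω} have positive real part). -/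
open Matrix

/-- A real matrix is anti-Hurwitz if all its (complex) eigenvalues have
strictly positive real part. -/
def AntiHurwitz {p : ℕ} (G : Matrix (Fin p) (Fin p) ℝ) : Prop :=
  ∀ z ∈ spectrum ℂ (G.map (algebraMap ℝ ℂ)), 0 < z.re

/-- The positive semidefinite square root of a positive semidefinite matrix
(the definition `Matrix.PosSemidef.sqrt` of the older Mathlib, since removed). -/
noncomputable def Matrix.PosSemidef.sqrt {n 𝕜 : Type*} [Fintype n] [DecidableEq n] [RCLike 𝕜]
    [PartialOrder 𝕜] [StarOrderedRing 𝕜]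
    {A : Matrix n n 𝕜} (hA : A.PosSemidef) : Matrix n n 𝕜 :=
  hA.1.eigenvectorUnitary.1 * diagonal ((↑) ∘ (√·) ∘ hA.1.eigenvalues) *
  (star hA.1.eigenvectorUnitary : Matrix n n 𝕜)

/-!
With `S = Q^{1/2}` and `M = S G₀ S⁻¹ + S⁻¹ G₀ᵀ S`, one has the congruence
`Q G_d + G_dᵀ Q = S (2(1 + μ) I + μ M) S`. Diagonalising `M`, the middle factor has eigenvalues
`2(1 + μ) + μ λ_i > 0`, so it is positive definite, and so is its congruence by the invertible `S`.
Anti-Hurwitzness is Lyapunov's criterion: if `G v = z v` with `v ≠ 0`, then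
`vᴴ (Q G + Gᴴ Q) v = 2 (Re z) (vᴴ Q v)`, and both quadratic forms are positive.
-/

open scoped ComplexOrder

namespace Matrix

variable {n 𝕜 : Type*} [Fintype n] [DecidableEq n] [RCLike 𝕜]

lemma PosSemidef.sqrt_eq_conjStarAlgAut {A : Matrix n n 𝕜} (hA : A.PosSemidef) :
    hA.sqrt = Unitary.conjStarAlgAut 𝕜 _ hA.1.eigenvectorUnitary
      (diagonal (RCLike.ofReal ∘ (√·) ∘ hA.1.eigenvalues)) := rfl

lemma PosSemidef.sqrt_mul_self {A : Matrix n n 𝕜} (hA : A.PosSemidef) :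
    hA.sqrt * hA.sqrt = A := by
  conv_rhs => rw [hA.1.spectral_theorem]
  rw [hA.sqrt_eq_conjStarAlgAut, ← map_mul, diagonal_mul_diagonal]
  congr 2
  funext i
  simp [← RCLike.ofReal_mul, Real.mul_self_sqrt (hA.eigenvalues_nonneg i)]

lemma PosDef.posDef_sqrt {A : Matrix n n 𝕜} (hA : A.PosDef) : hA.posSemidef.sqrt.PosDef := by
  rw [PosSemidef.sqrt_eq_conjStarAlgAut, Unitary.conjStarAlgAut_apply,
    Unitary.isUnit_coe.posDef_star_right_conjugate_iff, posDef_diagonal_iff]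
  intro i
  simpa only [Function.comp_apply, RCLike.ofReal_pos, Real.sqrt_pos] using hA.eigenvalues_pos i

lemma IsHermitian.posDef_smul_one_add_smul {M : Matrix n n 𝕜} (hM : M.IsHermitian) {a b : ℝ}
    (h : ∀ i, 0 < a + b * hM.eigenvalues i) : (a • (1 : Matrix n n 𝕜) + b • M).PosDef := by
  have hdiag : a • (1 : Matrix n n 𝕜) + b • diagonal (RCLike.ofReal ∘ hM.eigenvalues) =
      diagonal (RCLike.ofReal ∘ fun i => a + b * hM.eigenvalues i) := by
    ext i j
    rcases eq_or_ne i j with rfl | hij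
    · simp [RCLike.real_smul_eq_coe_mul]
    · simp [hij]
  have hconj : a • (1 : Matrix n n 𝕜) + b • M = Unitary.conjStarAlgAut ℝ _ hM.eigenvectorUnitary
      (diagonal (RCLike.ofReal ∘ fun i => a + b * hM.eigenvalues i)) := by
    rw [← hdiag, map_add, map_smul, map_smul, map_one]
    congr
    exact hM.spectral_theorem
  rw [hconj, Unitary.conjStarAlgAut_apply,
    Unitary.isUnit_coe.posDef_star_right_conjugate_iff, posDef_diagonal_iff]
  intro i
  simpa only [Function.comp_apply, RCLike.ofReal_pos] using h i

lemma PosDef.map_algebraMap {A : Matrix n n ℝ} (hA : A.PosDef) :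
    (A.map (algebraMap ℝ 𝕜)).PosDef := by
  set U : Matrix n n ℝ := hA.1.eigenvectorUnitary.1
  have hstar : (star U).map (algebraMap ℝ 𝕜) = star (U.map (algebraMap ℝ 𝕜)) := by
    rw [star_eq_conjTranspose, star_eq_conjTranspose, conjTranspose_map _ algebraMap_star_comm]
  have hunit : IsUnit (U.map (algebraMap ℝ 𝕜)) :=
    (Unitary.isUnit_coe (U := hA.1.eigenvectorUnitary)).map (algebraMap ℝ 𝕜).mapMatrix
  rw [hA.1.spectral_theorem, Unitary.conjStarAlgAut_apply, Matrix.map_mul, Matrix.map_mul, hstar,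
    hunit.posDef_star_right_conjugate_iff, diagonal_map (map_zero _), posDef_diagonal_iff]
  intro i
  simpa using hA.eigenvalues_pos i

lemma re_pos_of_mem_spectrum_of_posDef_lyapunov {Q G : Matrix n n 𝕜} (hQ : Q.PosDef)
    (hL : (Q * G + Gᴴ * Q).PosDef) {z : 𝕜} (hz : z ∈ spectrum 𝕜 G) : 0 < RCLike.re z := by
  rw [← spectrum_toLin', ← Module.End.hasEigenvalue_iff_mem_spectrum] at hz
  obtain ⟨v, hv⟩ := hz.exists_hasEigenvector
  have hv0 : v ≠ 0 := hv.2
  have hGv : G *ᵥ v = z • v := by simpa using hv.apply_eq_smul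
  have hform : star v ⬝ᵥ (Q * G + Gᴴ * Q) *ᵥ v = (z + star z) * (star v ⬝ᵥ Q *ᵥ v) := by
    rw [add_mulVec, dotProduct_add, ← mulVec_mulVec, ← mulVec_mulVec,
      dotProduct_mulVec (star v) Gᴴ, ← star_mulVec, hGv, mulVec_smul, dotProduct_smul, star_smul,
      smul_dotProduct, smul_eq_mul, smul_eq_mul, add_mul]
  have hre : RCLike.re (star v ⬝ᵥ (Q * G + Gᴴ * Q) *ᵥ v) =
      2 * RCLike.re z * RCLike.re (star v ⬝ᵥ Q *ᵥ v) := by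
    rw [hform, RCLike.star_def, RCLike.add_conj, ← RCLike.ofReal_ofNat, ← RCLike.ofReal_mul,
      RCLike.re_ofReal_mul]
  have hpos := hL.re_dotProduct_pos hv0
  rw [hre] at hpos
  nlinarith [hQ.re_dotProduct_pos hv0]

lemma mul_mul_add_transpose_mul_mul_eq_conj {R : Type*} [CommRing R] {S : Matrix n n R}
    (hS : IsUnit S) (G : Matrix n n R) :
    S * S * G + Gᵀ * (S * S) = S * (S * G * S⁻¹ + S⁻¹ * Gᵀ * S) * S := by
  have hS' : IsUnit S.det := (isUnit_iff_isUnit_det S).mp hS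
  simp only [Matrix.mul_add, Matrix.add_mul, Matrix.mul_assoc, nonsing_inv_mul _ hS',
    Matrix.mul_one]
  simp only [← Matrix.mul_assoc, mul_nonsing_inv _ hS', Matrix.one_mul]

lemma mul_add_transpose_mul_one_add_smul_one_add {R : Type*} [CommRing R]
    (Q G : Matrix n n R) (μ : R) :
    Q * (1 + μ • (1 + G)) + (1 + μ • (1 + G))ᵀ * Q =
      (2 * (1 + μ)) • Q + μ • (Q * G + Gᵀ * Q) := by
  simp only [Matrix.mul_add, Matrix.add_mul, transpose_add, transpose_one, transpose_smul,
    Matrix.mul_smul, Matrix.smul_mul, Matrix.mul_one, Matrix.one_mul]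
  module

end Matrix

lemma antiHurwitz_of_posDef_lyapunov {p : ℕ} {Q G : Matrix (Fin p) (Fin p) ℝ} (hQ : Q.PosDef)
    (hL : (Q * G + Gᵀ * Q).PosDef) : AntiHurwitz G := by
  intro z hz
  refine Matrix.re_pos_of_mem_spectrum_of_posDef_lyapunov (hQ.map_algebraMap (𝕜 := ℂ)) ?_ hz
  have hG : (G.map (algebraMap ℝ ℂ))ᴴ = Gᵀ.map (algebraMap ℝ ℂ) := by
    rw [← conjTranspose_map _ algebraMap_star_comm, conjTranspose_eq_transpose_of_trivial]
  have hLc := hL.map_algebraMap (𝕜 := ℂ)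
  rwa [Matrix.map_add _ (map_add _), Matrix.map_mul, Matrix.map_mul, ← hG] at hLc

theorem stmt12 {p : ℕ} (Q G₀ω : Matrix (Fin p) (Fin p) ℝ) (hQ : Q.PosDef)
    (μ : ℝ) (Gdω : Matrix (Fin p) (Fin p) ℝ)
    (hGdω : Gdω = 1 + μ • ((1 : Matrix (Fin p) (Fin p) ℝ) + G₀ω))
    (sqrtQ : Matrix (Fin p) (Fin p) ℝ) (hsqrt : sqrtQ = hQ.posSemidef.sqrt)
    (M : Matrix (Fin p) (Fin p) ℝ)
    (hM : M = sqrtQ * G₀ω * sqrtQ⁻¹ + sqrtQ⁻¹ * G₀ωᵀ * sqrtQ)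
    (hMH : M.IsHermitian)
    (heig : ∀ i, 0 < 1 + μ + μ * hMH.eigenvalues i / 2) :
    (Q * Gdω + Gdωᵀ * Q).PosDef ∧ AntiHurwitz Gdω := by
  have hSpd : sqrtQ.PosDef := hsqrt ▸ hQ.posDef_sqrt
  have hSS : sqrtQ * sqrtQ = Q := hsqrt ▸ hQ.posSemidef.sqrt_mul_self
  have hN : ((2 * (1 + μ)) • (1 : Matrix (Fin p) (Fin p) ℝ) + μ • M).PosDef :=
    hMH.posDef_smul_one_add_smul fun i => by linarith [heig i]
  have hcongr : Q * Gdω + Gdωᵀ * Q =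
      star sqrtQ * ((2 * (1 + μ)) • (1 : Matrix (Fin p) (Fin p) ℝ) + μ • M) * sqrtQ := by
    rw [hGdω, Matrix.mul_add_transpose_mul_one_add_smul_one_add, ← hSS,
      Matrix.mul_mul_add_transpose_mul_mul_eq_conj hSpd.isUnit, ← hM, star_eq_conjTranspose,
      hSpd.isHermitian.eq, Matrix.mul_add, Matrix.add_mul, Matrix.mul_smul, Matrix.smul_mul,
      Matrix.mul_smul, Matrix.smul_mul, Matrix.mul_one]
  have hL : (Q * Gdω + Gdωᵀ * Q).PosDef := by
    rwa [hcongr, hSpd.isUnit.posDef_star_left_conjugate_iff]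
  exact ⟨hL, antiHurwitz_of_posDef_lyapunov hQ hL⟩
end
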